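/- arXiv:2406.02692 — 3 statements merged into one kernel-verified Lean document; each statement's English description precedes it below -/
import Mathlib

section
/- Let D be a domain in ℝⁿ, n ≥ 2, and let f_j : D → ℝⁿ, j = 1, 2, …, be homeomorphisms satisfying the inverse Poletsky inequality with a function Q at a point y₀ ∈ ℝⁿ and converging to a mapping f : D → ℝ̄ⁿ locally uniformly in D with respect to the chordal metric h. Assume that f is not constant in D. Then for any y₀ ∈ ℝⁿ there exist ε₀ = ε₀(y₀) > 0, a point z₀ ∈ D, and ε₂ = ε₂(z₀) > 0 such that f_m(E) ∩ B̄(y₀,ε₀) = ∅ for all m = 1, 2, …, where E := B̄(z₀,ε₂). -/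
open Set MeasureTheory Metric Filter Topology
open scoped ENNReal NNReal BigOperators

noncomputable section

/-- Euclidean space `ℝⁿ`. -/
abbrev Rn (n : ℕ) := EuclideanSpace ℝ (Fin n)

/-- A (parametrized) path in `ℝⁿ`: a continuous map on a closed interval `[a, b]`. -/
structure Path' (n : ℕ) where
  a : ℝ
  b : ℝ
  hab : a ≤ b
  toFun : ℝ → Rn n
  cont : ContinuousOn toFun (Set.Icc a b)

/-- A path (on a compact interval) is (locally) rectifiable iff it has finite variation. -/
def Path'.Rectifiable {n : ℕ} (γ : Path' n) : Prop :=
  eVariationOn γ.toFun (Set.Icc γ.a γ.b) ≠ ⊤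

/-- The line integral `∫_γ ρ |dx|`, defined as the lower Darboux–Stieltjes integral of
`ρ ∘ γ` against arc length: the supremum over partitions `γ.a = t 0 ≤ ⋯ ≤ t k = γ.b`
of the sums `∑ (inf of ρ∘γ on [tᵢ, tᵢ₊₁]) · dist (γ tᵢ) (γ tᵢ₊₁)`. -/
def pathLIntegral {n : ℕ} (ρ : Rn n → ℝ≥0∞) (γ : Path' n) : ℝ≥0∞ :=
  ⨆ (k : ℕ) (t : Fin (k + 1) → ℝ) (_ : Monotone t) (_ : t 0 = γ.a)
      (_ : t (Fin.last k) = γ.b),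
    ∑ i : Fin k, (⨅ s ∈ Set.Icc (t i.castSucc) (t i.succ), ρ (γ.toFun s)) *
      edist (γ.toFun (t i.castSucc)) (γ.toFun (t i.succ))

/-- A Borel function `ρ : ℝⁿ → [0,∞]` is admissible for a family `Γ` of paths if
`∫_γ ρ |dx| ≥ 1` for every (locally) rectifiable `γ ∈ Γ`. -/
def IsAdmissible {n : ℕ} (ρ : Rn n → ℝ≥0∞) (Γ : Set (Path' n)) : Prop :=
  Measurable ρ ∧ ∀ γ ∈ Γ, γ.Rectifiable → 1 ≤ pathLIntegral ρ γ

/-- The modulus `M(Γ)` of a family of paths in `ℝⁿ`. -/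
def modulus {n : ℕ} (Γ : Set (Path' n)) : ℝ≥0∞ :=
  ⨅ (ρ : Rn n → ℝ≥0∞) (_ : IsAdmissible ρ Γ), ∫⁻ x, ρ x ^ n ∂volume

/-- `Γ(E, F, D)`: the family of paths `γ : [a,b] → ℝⁿ` with `γ a ∈ E`, `γ b ∈ F` and
`γ t ∈ D` for `t ∈ (a, b)`. -/
def pathFamily {n : ℕ} (E F D : Set (Rn n)) : Set (Path' n) :=
  {γ | γ.toFun γ.a ∈ E ∧ γ.toFun γ.b ∈ F ∧ ∀ t ∈ Set.Ioo γ.a γ.b, γ.toFun t ∈ D}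

/-- The spherical annulus `A(y₀, r₁, r₂) = {y : r₁ < |y - y₀| < r₂}`. -/
def annulusA {n : ℕ} (y0 : Rn n) (r1 r2 : ℝ) : Set (Rn n) :=
  {y | r1 < dist y y0 ∧ dist y y0 < r2}

/-- `Γ_f(y₀, r₁, r₂)`: all paths `γ` in `D` such that `f ∘ γ` joins the spheres
`S(y₀, r₁)` and `S(y₀, r₂)` within the annulus `A(y₀, r₁, r₂)`. -/
def gammaF {n : ℕ} (f : Rn n → Rn n) (D : Set (Rn n)) (y0 : Rn n) (r1 r2 : ℝ) :
    Set (Path' n) :=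
  {γ | (∀ t ∈ Set.Icc γ.a γ.b, γ.toFun t ∈ D) ∧
    ((f (γ.toFun γ.a) ∈ Metric.sphere y0 r1 ∧ f (γ.toFun γ.b) ∈ Metric.sphere y0 r2) ∨
      (f (γ.toFun γ.a) ∈ Metric.sphere y0 r2 ∧ f (γ.toFun γ.b) ∈ Metric.sphere y0 r1)) ∧
    ∀ t ∈ Set.Ioo γ.a γ.b, f (γ.toFun t) ∈ annulusA y0 r1 r2}

/-- `f` satisfies the inverse Poletsky inequality at `y₀ ∈ ℝⁿ` with the function `Q`. -/
def InversePoletskyAt {n : ℕ} (f : Rn n → Rn n) (D : Set (Rn n)) (Q : Rn n → ℝ≥0∞)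
    (y0 : Rn n) : Prop :=
  ∀ r1 r2 : ℝ, 0 < r1 → r1 < r2 →
    ∀ η : ℝ → ℝ≥0∞, Measurable η → (1 : ℝ≥0∞) ≤ ∫⁻ r in Set.Ioo r1 r2, η r →
      modulus (gammaF f D y0 r1 r2) ≤
        ∫⁻ y in annulusA y0 r1 r2 ∩ (f '' D), Q y * η (dist y y0) ^ n

/-- The inversion `ψ(y) = y / |y|²` at the origin. -/
def inv0 {n : ℕ} (y : Rn n) : Rn n := (‖y‖ ^ 2)⁻¹ • y

/-- `f` satisfies the inverse Poletsky inequality at every point `y₀ ∈ ℝ̄ⁿ`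
(at `y₀ = ∞` the condition is understood via the inversion `y ↦ y/|y|²`). -/
def InversePoletskyAll {n : ℕ} (f : Rn n → Rn n) (D : Set (Rn n)) (Q : Rn n → ℝ≥0∞) : Prop :=
  (∀ y0 : Rn n, InversePoletskyAt f D Q y0) ∧
    InversePoletskyAt (fun x => inv0 (f x)) D (fun y => Q (inv0 y)) 0

/-- The chordal (spherical) metric on `ℝ̄ⁿ = ℝⁿ ∪ {∞}`. -/
def chordal {n : ℕ} (x y : OnePoint (Rn n)) : ℝ :=
  match x, y with
  | Option.some x, Option.some y =>
      dist x y / (Real.sqrt (1 + ‖x‖ ^ 2) * Real.sqrt (1 + ‖y‖ ^ 2))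
  | Option.some x, Option.none => 1 / Real.sqrt (1 + ‖x‖ ^ 2)
  | Option.none, Option.some y => 1 / Real.sqrt (1 + ‖y‖ ^ 2)
  | Option.none, Option.none => 0

/-- The chordal diameter `h(E)` of a set `E ⊂ ℝ̄ⁿ`. -/
def chordalDiam {n : ℕ} (E : Set (OnePoint (Rn n))) : ℝ :=
  sSup {d | ∃ x ∈ E, ∃ y ∈ E, d = chordal x y}

/-- The chordal diameter of a set `E ⊂ ℝⁿ`. -/
def chordalDiam' {n : ℕ} (E : Set (Rn n)) : ℝ :=
  chordalDiam ((fun x : Rn n => (x : OnePoint (Rn n))) '' E)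

/-- `fm` converges to `f` locally uniformly on `D` with respect to the chordal metric. -/
def ChordalLocUnif {n : ℕ} (fm : ℕ → Rn n → Rn n) (f : Rn n → OnePoint (Rn n))
    (D : Set (Rn n)) : Prop :=
  ∀ x₀ ∈ D, ∀ ε > 0, ∃ δ > 0, ∃ N : ℕ, ∀ m ≥ N, ∀ x ∈ D, dist x x₀ < δ →
    chordal (fm m x : OnePoint (Rn n)) (f x) < ε

/-- `f` is a homeomorphism of `D` into `ℝⁿ`: continuous, injective and open on `D`. -/
def IsHomeoOn {n : ℕ} (f : Rn n → Rn n) (D : Set (Rn n)) : Prop :=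
  ContinuousOn f D ∧ Set.InjOn f D ∧ ∀ U ⊆ D, IsOpen U → IsOpen (f '' U)

/-- `φ` has finite mean oscillation at `x₀` (the limsup as `ε → 0` of the mean of
`|φ - φ̄_ε|` over `B(x₀, ε)` is finite, i.e. it is eventually bounded). -/
def FMOAt {n : ℕ} (φ : Rn n → ℝ) (x0 : Rn n) : Prop :=
  ∃ C : ℝ, ∀ᶠ ε in 𝓝[>] (0 : ℝ),
    (volume (Metric.ball x0 ε)).toReal⁻¹ *
      ∫ x in Metric.ball x0 ε,
        |φ x - (volume (Metric.ball x0 ε)).toReal⁻¹ * ∫ y in Metric.ball x0 ε, φ y| ≤ C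

/-- `ω_{n-1}`, the area of the unit sphere in `ℝⁿ` (as `(n-1)`-Hausdorff measure). -/
def omegaS (n : ℕ) : ℝ≥0∞ := μH[(n : ℝ) - 1] (Metric.sphere (0 : Rn n) 1)

/-- The spherical mean `q_{y₀}(r)` of `Q` over the sphere `S(y₀, r)`. -/
def sphMean {n : ℕ} (Q : Rn n → ℝ≥0∞) (y0 : Rn n) (r : ℝ) : ℝ≥0∞ :=
  (omegaS n * ENNReal.ofReal (r ^ (n - 1)))⁻¹ *
    ∫⁻ y in Metric.sphere y0 r, Q y ∂(μH[(n : ℝ) - 1])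

/-- The control hypothesis of the main lemmas at a point `y₀ ∈ ℝⁿ`: there are `ε₀ > 0`
and a Lebesgue measurable `ψ : (0,ε₀) → [0,∞]` such that
`I(ε,ε₀) := ∫_ε^{ε₀} ψ(t) dt < ∞` for all `ε ∈ (0,ε₀)`, `I(ε,ε₀) → ∞` as `ε → 0`, and
`∫_{A(y₀,ε,ε₀)} Q(y)·ψⁿ(|y-y₀|) dm(y) = α(ε,ε₀)·Iⁿ(ε,ε₀)` for some `α(ε,ε₀) > 0`
with `α(ε,ε₀) → 0` as `ε → 0`. -/
def GoodControlAt {n : ℕ} (Q : Rn n → ℝ≥0∞) (y0 : Rn n) : Prop :=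
  ∃ ε0 > (0 : ℝ), ∃ ψ : ℝ → ℝ≥0∞, Measurable ψ ∧
    (∀ ε ∈ Set.Ioo (0 : ℝ) ε0, (∫⁻ t in Set.Ioo ε ε0, ψ t) ≠ ⊤) ∧
    Filter.Tendsto (fun ε => ∫⁻ t in Set.Ioo ε ε0, ψ t) (𝓝[>] (0 : ℝ)) (𝓝 ⊤) ∧
    ∃ α : ℝ → ℝ,
      (∀ ε ∈ Set.Ioo (0 : ℝ) ε0, 0 < α ε ∧
        (∫⁻ y in annulusA y0 ε ε0, Q y * ψ (dist y y0) ^ n) =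
          ENNReal.ofReal (α ε) * (∫⁻ t in Set.Ioo ε ε0, ψ t) ^ n) ∧
      Filter.Tendsto α (𝓝[>] (0 : ℝ)) (𝓝 0)

/-- The control hypothesis for every `y₀ ∈ ℝ̄ⁿ` (at `y₀ = ∞` understood via the
inversion `y ↦ y/|y|²`, i.e. with `Q(y/|y|²)` in place of `Q` and annuli at the origin). -/
def GoodControlAll {n : ℕ} (Q : Rn n → ℝ≥0∞) : Prop :=
  (∀ y0 : Rn n, GoodControlAt Q y0) ∧ GoodControlAt (fun y => Q (inv0 y)) (0 : Rn n)


/-! Choose `z ∈ D` with `f z ≠ y₀'`. Through stereographic projection the chordal metric becomes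
Euclidean, so locally uniform convergence keeps the tail `f_m`, `m ≥ N`, uniformly away from `y₀'`
near `z`; since the chordal metric is dominated by the Euclidean one, this also holds in `ℝⁿ`.
Each of the finitely many remaining homeomorphisms takes the value `y₀'` at most once, so moving
`z` slightly we reach a point `z₀` where none of them does, and by continuity all `f_m` stay away
from `y₀'` on a small ball around `z₀`. -/

/-- Stereographic projection of `ℝ̄ⁿ` onto the unit sphere of `ℝⁿ × ℝ`. -/
def stereo {n : ℕ} : OnePoint (Rn n) → WithLp 2 (Rn n × ℝ)
  | Option.some x => WithLp.toLp 2 ((2 / (1 + ‖x‖ ^ 2)) • x, (‖x‖ ^ 2 - 1) / (‖x‖ ^ 2 + 1))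
  | Option.none => WithLp.toLp 2 (0, 1)

lemma chordal_nonneg {n : ℕ} (p q : OnePoint (Rn n)) : 0 ≤ chordal p q := by
  match p, q with
  | Option.some _, Option.some _ => exact div_nonneg dist_nonneg (by positivity)
  | Option.some _, Option.none => exact div_nonneg zero_le_one (Real.sqrt_nonneg _)
  | Option.none, Option.some _ => exact div_nonneg zero_le_one (Real.sqrt_nonneg _)
  | Option.none, Option.none => exact le_rfl

lemma chordal_pos {n : ℕ} {p q : OnePoint (Rn n)} (h : p ≠ q) : 0 < chordal p q := by
  match p, q with
  | Option.some x, Option.some y =>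
    exact div_pos (dist_pos.2 fun hxy => h (by rw [hxy])) (by positivity)
  | Option.some _, Option.none => exact div_pos one_pos (Real.sqrt_pos.2 (by positivity))
  | Option.none, Option.some _ => exact div_pos one_pos (Real.sqrt_pos.2 (by positivity))
  | Option.none, Option.none => exact absurd rfl h

lemma chordal_coe_le_dist {n : ℕ} (x y : Rn n) :
    chordal (x : OnePoint (Rn n)) (y : OnePoint (Rn n)) ≤ dist x y := by
  have hx : 1 ≤ Real.sqrt (1 + ‖x‖ ^ 2) := Real.one_le_sqrt.2 (by nlinarith [sq_nonneg ‖x‖])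
  have hy : 1 ≤ Real.sqrt (1 + ‖y‖ ^ 2) := Real.one_le_sqrt.2 (by nlinarith [sq_nonneg ‖y‖])
  exact div_le_self dist_nonneg (one_le_mul_of_one_le_of_one_le hx hy)

lemma dist_stereo {n : ℕ} (p q : OnePoint (Rn n)) :
    dist (stereo p) (stereo q) = 2 * chordal p q := by
  refine (sq_eq_sq₀ dist_nonneg (mul_nonneg zero_le_two (chordal_nonneg p q))).1 ?_
  rw [dist_eq_norm, WithLp.prod_norm_sq_eq_of_L2, WithLp.sub_fst, WithLp.sub_snd]
  match p, q with
  | Option.some x, Option.some y =>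
    have hx : (0 : ℝ) < 1 + ‖x‖ ^ 2 := by positivity
    have hy : (0 : ℝ) < 1 + ‖y‖ ^ 2 := by positivity
    simp only [stereo, chordal, WithLp.toLp_fst, WithLp.toLp_snd, Real.norm_eq_abs, sq_abs,
      dist_eq_norm, norm_sub_sq_real, norm_smul, real_inner_smul_left, real_inner_smul_right,
      mul_pow, div_pow, Real.sq_sqrt hx.le, Real.sq_sqrt hy.le]
    field_simp
    ring
  | Option.some x, Option.none =>
    have hx : (0 : ℝ) < 1 + ‖x‖ ^ 2 := by positivity
    simp only [stereo, chordal, WithLp.toLp_fst, WithLp.toLp_snd, sub_zero, norm_smul,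
      Real.norm_eq_abs, mul_pow, div_pow, sq_abs, one_pow, Real.sq_sqrt hx.le]
    field_simp
    ring
  | Option.none, Option.some y =>
    have hy : (0 : ℝ) < 1 + ‖y‖ ^ 2 := by positivity
    simp only [stereo, chordal, WithLp.toLp_fst, WithLp.toLp_snd, zero_sub, norm_neg, norm_smul,
      Real.norm_eq_abs, mul_pow, div_pow, sq_abs, one_pow, Real.sq_sqrt hy.le]
    field_simp
    ring
  | Option.none, Option.none => simp [stereo, chordal]

lemma lipschitzWith_stereo_coe {n : ℕ} :
    LipschitzWith 2 fun x : Rn n => stereo (x : OnePoint (Rn n)) :=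
  LipschitzWith.of_dist_le_mul fun x y => by
    rw [dist_stereo]
    exact mul_le_mul_of_nonneg_left (chordal_coe_le_dist x y) zero_le_two

lemma ChordalLocUnif.tendstoLocallyUniformlyOn_stereo {n : ℕ} {fm : ℕ → Rn n → Rn n}
    {f : Rn n → OnePoint (Rn n)} {D : Set (Rn n)} (h : ChordalLocUnif fm f D) :
    TendstoLocallyUniformlyOn (fun m x => stereo (fm m x : OnePoint (Rn n)))
      (fun x => stereo (f x)) atTop D := by
  rw [Metric.tendstoLocallyUniformlyOn_iff]
  intro ε hε x hx
  obtain ⟨δ, hδ, N, hN⟩ := h x hx (ε / 2) (half_pos hε)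
  refine ⟨D ∩ ball x δ, inter_mem_nhdsWithin D (ball_mem_nhds x hδ),
    eventually_atTop.2 ⟨N, fun m hm y hy => ?_⟩⟩
  rw [dist_comm, dist_stereo]
  linarith [hN m hm y hy.1 hy.2]

theorem TendstoLocallyUniformlyOn.exists_eventually_lt_dist {X Y : Type*} [TopologicalSpace X]
    [PseudoMetricSpace Y] {F : ℕ → X → Y} {G : X → Y} {D : Set X}
    (hFG : TendstoLocallyUniformlyOn F G atTop D) (hF : ∀ m, ContinuousOn (F m) D)
    {z : X} (hz : z ∈ D) {w : Y} (hw : 0 < dist (G z) w) :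
    ∃ c > 0, ∃ N, ∀ᶠ x in 𝓝[D] z, ∀ m ≥ N, c < dist (F m x) w := by
  have hG : ContinuousWithinAt G D z := hFG.continuousOn (Frequently.of_forall hF) z hz
  have hlim : Tendsto (fun p : ℕ × X => F p.1 p.2) (atTop ×ˢ 𝓝[D] z) (𝓝 (G z)) :=
    tendsto_comp_of_locally_uniform_limit_within (F := fun p => F p.1) (g := Prod.snd) hG
      tendsto_snd fun u hu => by
        obtain ⟨t, ht, hFt⟩ := hFG u hu z hz
        exact ⟨t, ht, tendsto_fst.eventually hFt⟩
  obtain ⟨pa, hpa, pb, hpb, hclose⟩ :=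
    eventually_prod_iff.1 (hlim.eventually (ball_mem_nhds (G z) (half_pos hw)))
  obtain ⟨N, hN⟩ := eventually_atTop.1 hpa
  refine ⟨_, half_pos hw, N, hpb.mono fun x hx m hm => ?_⟩
  have hmx : dist (F m x) (G z) < dist (G z) w / 2 := hclose (hN m hm) hx
  linarith [dist_triangle_left (G z) w (F m x)]

lemma ChordalLocUnif.exists_eventually_lt_dist {n : ℕ} {fm : ℕ → Rn n → Rn n}
    {f : Rn n → OnePoint (Rn n)} {D : Set (Rn n)} (h : ChordalLocUnif fm f D)
    (hfm : ∀ m, ContinuousOn (fm m) D) {z : Rn n} (hz : z ∈ D) {w : Rn n} (hw : f z ≠ w) :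
    ∃ c > 0, ∃ N, ∀ᶠ x in 𝓝[D] z, ∀ m ≥ N, c < dist (fm m x) w := by
  have hw' : 0 < dist (stereo (f z)) (stereo (w : OnePoint (Rn n))) := by
    rw [dist_stereo]
    exact mul_pos two_pos (chordal_pos hw)
  obtain ⟨c, hc, N, hcN⟩ := h.tendstoLocallyUniformlyOn_stereo.exists_eventually_lt_dist
    (fun m => lipschitzWith_stereo_coe.continuous.comp_continuousOn (hfm m)) hz hw'
  refine ⟨c / 2, half_pos hc, N, hcN.mono fun x hx m hm => ?_⟩
  have := hx m hm
  rw [dist_stereo] at this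
  linarith [chordal_coe_le_dist (fm m x) w]

/-- Each `g m` takes the value `w` at most once, so all but finitely many points of `U` will do. -/
theorem exists_mem_eventually_lt_dist_of_injOn {X Y : Type*} [TopologicalSpace X]
    [MetricSpace Y] {g : ℕ → X → Y} {D U : Set X} (hg : ∀ m, ContinuousOn (g m) D)
    (hinj : ∀ m, InjOn (g m) D) (hU : IsOpen U) (hUD : U ⊆ D) (hUinf : U.Infinite) (w : Y)
    (N : ℕ) : ∃ z ∈ U, ∃ ε > 0, ∀ᶠ x in 𝓝 z, ∀ m < N, ε < dist (g m x) w := by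
  have hS : (⋃ m ∈ Iio N, D ∩ g m ⁻¹' {w}).Finite :=
    (finite_Iio N).biUnion fun m _ =>
      Subsingleton.finite fun a ha b hb => hinj m ha.1 hb.1 (ha.2.trans hb.2.symm)
  obtain ⟨z, hzU, hzS⟩ := (hUinf.sdiff hS).nonempty
  have hne : ∀ m < N, 0 < dist (g m z) w := fun m hm =>
    dist_pos.2 fun h => hzS (mem_biUnion hm ⟨hUD hzU, h⟩)
  have hsmall : ∀ᶠ ε in 𝓝[>] (0 : ℝ), (∀ m < N, ε < dist (g m z) w) ∧ 0 < ε :=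
    ((eventually_all_finite (finite_Iio N)).2 fun m hm =>
      eventually_nhdsWithin_of_eventually_nhds (eventually_lt_nhds (hne m hm))).and
        self_mem_nhdsWithin
  obtain ⟨ε, hεz, hε⟩ := hsmall.exists
  refine ⟨z, hzU, ε, hε, (eventually_all_finite (finite_Iio N)).2 fun m hm => ?_⟩
  have hgz : ContinuousAt (g m) z := (hg m).continuousAt (mem_of_superset (hU.mem_nhds hzU) hUD)
  exact (hgz.dist continuousAt_const).eventually (lt_mem_nhds (hεz m hm))

theorem exists_image_closedBall_inter_closedBall_eq_empty {ι X Y : Type*} [PseudoMetricSpace X]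
    [PseudoMetricSpace Y] {g : ι → X → Y} {z : X} {w : Y} {ε : ℝ}
    (h : ∀ᶠ x in 𝓝 z, ∀ m, ε < dist (g m x) w) :
    ∃ r > 0, ∀ m, g m '' closedBall z r ∩ closedBall w ε = ∅ := by
  obtain ⟨r, hr, hball⟩ := Metric.eventually_nhds_iff_ball.1 h
  refine ⟨r / 2, half_pos hr, fun m => eq_empty_iff_forall_notMem.2 ?_⟩
  rintro _ ⟨⟨x, hx, rfl⟩, hxw⟩
  exact (hball x (closedBall_subset_ball (half_lt_self hr) hx) m).not_ge hxw

theorem statement3_general {n : ℕ} (D : Set (Rn n)) (hDopen : IsOpen D)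
    (fm : ℕ → Rn n → Rn n) (f : Rn n → OnePoint (Rn n))
    (hhom : ∀ m : ℕ, IsHomeoOn (fm m) D)
    (hconv : ChordalLocUnif fm f D)
    (hnc : ¬ ∃ c : OnePoint (Rn n), ∀ x ∈ D, f x = c) :
    ∀ y0' : Rn n, ∃ ε0 > (0 : ℝ), ∃ z0 ∈ D, ∃ ε2 > (0 : ℝ),
      ∀ m : ℕ, (fm m '' Metric.closedBall z0 ε2) ∩ Metric.closedBall y0' ε0 = ∅ := by
  intro w
  obtain ⟨z, hzD, hfz⟩ : ∃ z ∈ D, f z ≠ w := by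
    by_contra! h
    exact hnc ⟨w, h⟩
  have : Nontrivial (Rn n) := by
    by_contra h
    rw [not_nontrivial_iff_subsingleton] at h
    exact hnc ⟨f z, fun x _ => congrArg f (Subsingleton.elim x z)⟩
  obtain ⟨c, hc, N, htail⟩ := hconv.exists_eventually_lt_dist (fun m => (hhom m).1) hzD hfz
  obtain ⟨U, hU_tail, hU, hzU⟩ := _root_.eventually_nhds_iff.1 (hDopen.nhdsWithin_eq hzD ▸ htail)
  have hUD : IsOpen (U ∩ D) := hU.inter hDopen
  obtain ⟨z0, hz0, ε, hε, hhead⟩ := exists_mem_eventually_lt_dist_of_injOn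
    (fun m => (hhom m).1) (fun m => (hhom m).2.1) hUD inter_subset_right
    (infinite_of_mem_nhds z (hUD.mem_nhds ⟨hzU, hzD⟩)) w N
  refine ⟨min c ε, lt_min hc hε, z0, hz0.2, exists_image_closedBall_inter_closedBall_eq_empty ?_⟩
  filter_upwards [hU.mem_nhds hz0.1, hhead] with x hxU hx m
  rcases lt_or_ge m N with hm | hm
  · exact (min_le_right _ _).trans_lt (hx m hm)
  · exact (min_le_left _ _).trans_lt (hU_tail x hxU m hm)

/-- Lemma 4: if homeomorphisms `f_j : D → ℝⁿ` satisfying the inverse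
Poletsky inequality with `Q` at a point `y₀ ∈ ℝⁿ` converge locally uniformly (w.r.t. the
chordal metric) to a nonconstant mapping `f : D → ℝ̄ⁿ`, then for every `y₀' ∈ ℝⁿ` there
are `ε₀ > 0`, `z₀ ∈ D` and `ε₂ > 0` with
`f_m(B̄(z₀,ε₂)) ∩ B̄(y₀',ε₀) = ∅` for all `m`. -/
theorem statement3 {n : ℕ} (hn : 2 ≤ n) (D : Set (Rn n)) (hDopen : IsOpen D)
    (hDconn : IsConnected D) (Q : Rn n → ℝ≥0∞) (hQmeas : Measurable Q)
    (fm : ℕ → Rn n → Rn n) (f : Rn n → OnePoint (Rn n))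
    (hhom : ∀ m : ℕ, IsHomeoOn (fm m) D)
    (y0 : Rn n) (hIP : ∀ m : ℕ, InversePoletskyAt (fm m) D Q y0)
    (hconv : ChordalLocUnif fm f D)
    (hnc : ¬ ∃ c : OnePoint (Rn n), ∀ x ∈ D, f x = c) :
    ∀ y0' : Rn n, ∃ ε0 > (0 : ℝ), ∃ z0 ∈ D, ∃ ε2 > (0 : ℝ),
      ∀ m : ℕ, (fm m '' Metric.closedBall z0 ε2) ∩ Metric.closedBall y0' ε0 = ∅ :=
  statement3_general D hDopen fm f hhom hconv hnc
end
end

section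
/- Let D ⊂ ℝⁿ, n ≥ 2, be a domain, let f : D → ℝⁿ be continuous, let y₀ ∈ ℝⁿ and 0 < ε < ε₀, and let E, F ⊂ D be sets such that f(E) ∩ B(y₀,ε₀) = ∅ and f(F) ⊂ B̄(y₀,ε). Then every path γ ∈ Γ(E,F,D) has a subpath γ₂ (a restriction of γ to a subinterval) such that f∘γ₂ ∈ Γ(S(y₀,ε), S(y₀,ε₀), A(y₀,ε,ε₀)); consequently Γ(E,F,D) is minorized by Γ_f(y₀,ε,ε₀) and therefore M(Γ(E,F,D)) ≤ M(Γ_f(y₀,ε,ε₀)). -/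
open Set MeasureTheory Metric Filter Topology
open scoped ENNReal NNReal BigOperators

noncomputable section

lemma pathLIntegral_mono_sub {n : ℕ} (ρ : Rn n → ℝ≥0∞) (γ γ₂ : Path' n)
    (hfun : γ₂.toFun = γ.toFun) (ha : γ.a ≤ γ₂.a) (hb : γ₂.b ≤ γ.b) :
    pathLIntegral ρ γ₂ ≤ pathLIntegral ρ γ := by
  refine iSup_le fun k => iSup_le fun t => iSup_le fun hmono => iSup_le fun h0 =>
    iSup_le fun hl => ?_
  set u : Fin (k + 3) → ℝ := Fin.cons γ.a (Fin.snoc t γ.b) with hu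
  have hu0 : u 0 = γ.a := rfl
  have hulast : u (Fin.last (k + 2)) = γ.b := by
    have : Fin.last (k + 2) = (Fin.last (k + 1)).succ := rfl
    rw [this, hu, Fin.cons_succ, Fin.snoc_last]
  have humono : Monotone u := by
    rw [Fin.monotone_iff_le_succ]
    intro i
    refine Fin.cases ?_ (fun j => ?_) i
    · -- u 0 ≤ u 1
      have h1 : u (Fin.castSucc 0) = γ.a := rfl
      have h2 : u (Fin.succ 0) = t 0 := by
        rw [hu]
        rw [show (Fin.succ 0 : Fin (k+3)) = Fin.succ (Fin.castSucc (0 : Fin (k+1))) from rfl,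
          Fin.cons_succ, Fin.snoc_castSucc]
      rw [h1, h2, h0]; exact ha
    · -- j : Fin (k+1)
      have h1 : u j.succ.castSucc = t j := by
        rw [hu, ← Fin.succ_castSucc, Fin.cons_succ, Fin.snoc_castSucc]
      rw [h1]
      refine Fin.lastCases ?_ (fun m => ?_) j
      · have h2 : u (Fin.last k).succ.succ = γ.b := by
          rw [hu, Fin.cons_succ, Fin.succ_last, Fin.snoc_last]
        rw [h2, hl]; exact hb
      · have : u m.castSucc.succ.succ = t m.succ := by
          rw [hu, Fin.cons_succ, Fin.succ_castSucc, Fin.snoc_castSucc]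
        rw [this]
        exact hmono (Fin.castSucc_le_succ m)
  have key : (∑ i : Fin (k+2), (⨅ s ∈ Set.Icc (u i.castSucc) (u i.succ), ρ (γ.toFun s)) *
      edist (γ.toFun (u i.castSucc)) (γ.toFun (u i.succ))) ≤ pathLIntegral ρ γ := by
    exact le_iSup_of_le (k+2) <| le_iSup_of_le u <| le_iSup_of_le humono <|
      le_iSup_of_le hu0 <| le_iSup_of_le hulast le_rfl
  refine le_trans ?_ key
  rw [Fin.sum_univ_succ, Fin.sum_univ_castSucc]
  have hmid : ∀ j : Fin k,
      (⨅ s ∈ Set.Icc (u (j.castSucc.succ).castSucc) (u (j.castSucc.succ).succ), ρ (γ.toFun s)) *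
        edist (γ.toFun (u (j.castSucc.succ).castSucc)) (γ.toFun (u (j.castSucc.succ).succ)) =
      (⨅ s ∈ Set.Icc (t j.castSucc) (t j.succ), ρ (γ₂.toFun s)) *
        edist (γ₂.toFun (t j.castSucc)) (γ₂.toFun (t j.succ)) := by
    intro j
    have e1 : u (j.castSucc.succ).castSucc = t j.castSucc := by
      rw [hu, ← Fin.succ_castSucc, Fin.cons_succ, Fin.snoc_castSucc]
    have e2 : u (j.castSucc.succ).succ = t j.succ := by
      rw [hu, Fin.cons_succ, Fin.succ_castSucc, Fin.snoc_castSucc]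
    rw [e1, e2, hfun]
  calc (∑ i : Fin k, (⨅ s ∈ Set.Icc (t i.castSucc) (t i.succ), ρ (γ₂.toFun s)) *
      edist (γ₂.toFun (t i.castSucc)) (γ₂.toFun (t i.succ)))
      = ∑ j : Fin k, (⨅ s ∈ Set.Icc (u (j.castSucc.succ).castSucc) (u (j.castSucc.succ).succ),
          ρ (γ.toFun s)) * edist (γ.toFun (u (j.castSucc.succ).castSucc))
          (γ.toFun (u (j.castSucc.succ).succ)) := by
        exact (Finset.sum_congr rfl fun j _ => (hmid j)).symm
    _ ≤ _ := le_trans le_self_add le_add_self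

/-- if `f` is continuous on a domain `D`, `0 < ε < ε₀`, `E, F ⊆ D`,
`f(E) ∩ B(y₀,ε₀) = ∅` and `f(F) ⊆ B̄(y₀,ε)`, then every path `γ ∈ Γ(E,F,D)` has a
subpath `γ₂` (a restriction of `γ` to a subinterval) with
`f ∘ γ₂ ∈ Γ(S(y₀,ε), S(y₀,ε₀), A(y₀,ε,ε₀))`, i.e. `γ₂ ∈ Γ_f(y₀,ε,ε₀)`; consequently
`Γ(E,F,D)` is minorized by `Γ_f(y₀,ε,ε₀)` and `M(Γ(E,F,D)) ≤ M(Γ_f(y₀,ε,ε₀))`. -/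
theorem statement8 {n : ℕ} (hn : 2 ≤ n) (D : Set (Rn n)) (hDopen : IsOpen D)
    (hDconn : IsConnected D) (f : Rn n → Rn n) (hf : ContinuousOn f D)
    (y0 : Rn n) (ε ε0 : ℝ) (hε : 0 < ε) (hεε0 : ε < ε0)
    (E F : Set (Rn n)) (hE : E ⊆ D) (hF : F ⊆ D)
    (hEout : (f '' E) ∩ Metric.ball y0 ε0 = ∅)
    (hFin : f '' F ⊆ Metric.closedBall y0 ε) :
    (∀ γ ∈ pathFamily E F D, ∃ γ₂ : Path' n,
      γ₂.toFun = γ.toFun ∧ γ.a ≤ γ₂.a ∧ γ₂.b ≤ γ.b ∧ γ₂ ∈ gammaF f D y0 ε ε0) ∧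
    modulus (pathFamily E F D) ≤ modulus (gammaF f D y0 ε ε0) := by
  have hmain : ∀ γ ∈ pathFamily E F D, ∃ γ₂ : Path' n,
      γ₂.toFun = γ.toFun ∧ γ.a ≤ γ₂.a ∧ γ₂.b ≤ γ.b ∧ γ₂ ∈ gammaF f D y0 ε ε0 := by
    intro γ hγ
    obtain ⟨hEa, hFb, hDmem⟩ := hγ
    have hd : ∀ t ∈ Set.Icc γ.a γ.b, γ.toFun t ∈ D := by
      intro t ht
      rcases eq_or_lt_of_le ht.1 with h | h
      · rw [← h]; exact hE hEa
      rcases eq_or_lt_of_le ht.2 with h2 | h2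
      · rw [h2]; exact hF hFb
      exact hDmem t ⟨h, h2⟩
    set g : ℝ → ℝ := fun t => dist (f (γ.toFun t)) y0 with hgdef
    have hgc : ContinuousOn g (Set.Icc γ.a γ.b) :=
      (continuous_id.dist continuous_const).comp_continuousOn (hf.comp γ.cont hd)
    have hga : ε0 ≤ g γ.a := by
      by_contra h
      push_neg at h
      have hmem : f (γ.toFun γ.a) ∈ (f '' E) ∩ Metric.ball y0 ε0 :=
        ⟨⟨_, hEa, rfl⟩, Metric.mem_ball.mpr h⟩
      rw [hEout] at hmem
      exact hmem
    have hgb : g γ.b ≤ ε := Metric.mem_closedBall.mp (hFin ⟨_, hFb, rfl⟩)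
    have hab : γ.a < γ.b := by
      rcases eq_or_lt_of_le γ.hab with h | h
      · exfalso; rw [h] at hga; linarith
      · exact h
    -- first hitting of {g ≤ ε}
    set S1 : Set ℝ := Set.Icc γ.a γ.b ∩ g ⁻¹' (Set.Iic ε) with hS1def
    have hS1closed : IsClosed S1 :=
      hgc.preimage_isClosed_of_isClosed isClosed_Icc isClosed_Iic
    have hS1ne : S1.Nonempty := ⟨γ.b, ⟨γ.hab, le_rfl⟩, hgb⟩
    have hS1bdd : BddBelow S1 := ⟨γ.a, fun x hx => hx.1.1⟩
    set b₂ : ℝ := sInf S1 with hb₂def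
    have hb₂mem : b₂ ∈ S1 := hS1closed.csInf_mem hS1ne hS1bdd
    have hab₂ : γ.a < b₂ := by
      rcases eq_or_lt_of_le hb₂mem.1.1 with h | h
      · exfalso
        have := hb₂mem.2
        rw [← h] at this
        have h2 : g γ.a ≤ ε := this
        linarith
      · exact h
    have hb₂b : b₂ ≤ γ.b := hb₂mem.1.2
    have hlow : ∀ t, γ.a ≤ t → t < b₂ → ε < g t := by
      intro t h1 h2
      by_contra h
      push_neg at h
      have : t ∈ S1 := ⟨⟨h1, le_trans h2.le hb₂b⟩, h⟩
      exact absurd (csInf_le hS1bdd this) (not_le.mpr h2)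
    have hgb₂ : g b₂ = ε := by
      refine le_antisymm hb₂mem.2 ?_
      have hcw : ContinuousWithinAt g (Set.Ico γ.a b₂) b₂ :=
        (hgc b₂ ⟨hab₂.le, hb₂b⟩).mono
          (Set.Ico_subset_Icc_self.trans (Set.Icc_subset_Icc_right hb₂b))
      haveI : (𝓝[Set.Ico γ.a b₂] b₂).NeBot := by
        refine mem_closure_iff_nhdsWithin_neBot.mp ?_
        rw [closure_Ico (ne_of_lt hab₂)]
        exact ⟨hab₂.le, le_rfl⟩
      refine ge_of_tendsto hcw ?_
      exact Filter.eventually_of_mem self_mem_nhdsWithin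
        fun t ht => (hlow t ht.1 ht.2).le
    -- last exit from {g ≥ ε0} before b₂
    set S2 : Set ℝ := Set.Icc γ.a b₂ ∩ g ⁻¹' (Set.Ici ε0) with hS2def
    have hIccsub : Set.Icc γ.a b₂ ⊆ Set.Icc γ.a γ.b := Set.Icc_subset_Icc_right hb₂b
    have hS2closed : IsClosed S2 :=
      (hgc.mono hIccsub).preimage_isClosed_of_isClosed isClosed_Icc isClosed_Ici
    have hS2ne : S2.Nonempty := ⟨γ.a, ⟨le_rfl, hab₂.le⟩, hga⟩
    have hS2bdd : BddAbove S2 := ⟨b₂, fun x hx => hx.1.2⟩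
    set a₂ : ℝ := sSup S2 with ha₂def
    have ha₂mem : a₂ ∈ S2 := hS2closed.csSup_mem hS2ne hS2bdd
    have hγa₂ : γ.a ≤ a₂ := ha₂mem.1.1
    have ha₂b₂ : a₂ < b₂ := by
      rcases eq_or_lt_of_le ha₂mem.1.2 with h | h
      · exfalso
        have := ha₂mem.2
        rw [h] at this
        have h2 : ε0 ≤ g b₂ := this
        rw [hgb₂] at h2
        linarith
      · exact h
    have hhigh : ∀ t, a₂ < t → t ≤ b₂ → g t < ε0 := by
      intro t h1 h2
      by_contra h
      push_neg at h
      have : t ∈ S2 := ⟨⟨le_trans hγa₂ h1.le, h2⟩, h⟩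
      exact absurd (le_csSup hS2bdd this) (not_le.mpr h1)
    have hga₂ : g a₂ = ε0 := by
      refine le_antisymm ?_ ha₂mem.2
      have hcw : ContinuousWithinAt g (Set.Ioc a₂ b₂) a₂ :=
        (hgc a₂ ⟨hγa₂, le_trans ha₂mem.1.2 hb₂b⟩).mono
          (fun x hx => ⟨le_trans hγa₂ hx.1.le, le_trans hx.2 hb₂b⟩)
      haveI : (𝓝[Set.Ioc a₂ b₂] a₂).NeBot := by
        refine mem_closure_iff_nhdsWithin_neBot.mp ?_
        rw [closure_Ioc (ne_of_lt ha₂b₂)]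
        exact ⟨le_rfl, ha₂b₂.le⟩
      refine le_of_tendsto hcw ?_
      exact Filter.eventually_of_mem self_mem_nhdsWithin
        fun t ht => (hhigh t ht.1 ht.2).le
    have hb₂γb : b₂ ≤ γ.b := hb₂b
    refine ⟨⟨a₂, b₂, ha₂b₂.le, γ.toFun,
      γ.cont.mono (Set.Icc_subset_Icc hγa₂ hb₂γb)⟩, rfl, hγa₂, hb₂γb, ?_, ?_, ?_⟩
    · intro t ht
      exact hd t ⟨le_trans hγa₂ ht.1, le_trans ht.2 hb₂γb⟩
    · exact Or.inr ⟨Metric.mem_sphere.mpr hga₂, Metric.mem_sphere.mpr hgb₂⟩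
    · intro t ht
      exact ⟨hlow t (le_trans hγa₂ ht.1.le) ht.2, hhigh t ht.1 ht.2.le⟩
  refine ⟨hmain, ?_⟩
  refine le_iInf fun ρ => le_iInf fun hρ => ?_
  have hadm : IsAdmissible ρ (pathFamily E F D) := by
    refine ⟨hρ.1, fun γ hγ hrect => ?_⟩
    obtain ⟨γ₂, hfun, hle1, hle2, hmem⟩ := hmain γ hγ
    have hrect₂ : γ₂.Rectifiable := by
      unfold Path'.Rectifiable
      rw [hfun]
      exact ne_top_of_le_ne_top hrect
        (eVariationOn.mono γ.toFun (Set.Icc_subset_Icc hle1 hle2))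
    exact le_trans (hρ.2 γ₂ hmem hrect₂) (pathLIntegral_mono_sub ρ γ γ₂ hfun hle1 hle2)
  exact iInf₂_le ρ hadm
end
end

section
/- Let D be a domain in ℝⁿ, n ≥ 2, let x₀ ∈ D and ε₁ > 0 with B(x₀,ε₁) ⊂ D, and let f_m : D → ℝⁿ, m = 1, 2, …, be mappings converging to f : D → ℝ̄ⁿ locally uniformly in D with respect to the chordal metric h. Suppose there is r_* > 0 such that B_h(f_m(x₀), r_*) ⊂ f_m(B(x₀,ε₁)) for all m, where B_h(w,r) = {y ∈ ℝ̄ⁿ : h(y,w) < r}. Then B_h(f(x₀), r_*/2) ⊂ f_m(B(x₀,ε₁)) ⊂ ℝⁿ for all sufficiently large m; in particular f(x₀) ∈ ℝⁿ, i.e., f(x₀) ≠ ∞. -/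
open Set MeasureTheory Metric Filter Topology
open scoped ENNReal NNReal BigOperators

noncomputable section

def chEmb {n : ℕ} : OnePoint (Rn n) → WithLp 2 (Rn n × ℝ)
  | Option.none => (WithLp.equiv 2 _).symm (0, 1)
  | Option.some x =>
      (WithLp.equiv 2 _).symm ((1 + ‖x‖ ^ 2)⁻¹ • x, ‖x‖ ^ 2 / (1 + ‖x‖ ^ 2))

lemma key_sq {n : ℕ} (x y : Rn n) :
    ‖(1 + ‖x‖ ^ 2)⁻¹ • x - (1 + ‖y‖ ^ 2)⁻¹ • y‖ ^ 2 +
      (‖x‖ ^ 2 / (1 + ‖x‖ ^ 2) - ‖y‖ ^ 2 / (1 + ‖y‖ ^ 2)) ^ 2 =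
    ‖x - y‖ ^ 2 / ((1 + ‖x‖ ^ 2) * (1 + ‖y‖ ^ 2)) := by
  have ha : (0:ℝ) < 1 + ‖x‖ ^ 2 := by positivity
  have hb : (0:ℝ) < 1 + ‖y‖ ^ 2 := by positivity
  have h1 := norm_sub_sq_real ((1 + ‖x‖ ^ 2)⁻¹ • x) ((1 + ‖y‖ ^ 2)⁻¹ • y)
  have h2 := norm_sub_sq_real x y
  rw [h1, h2]
  simp only [norm_smul, real_inner_smul_left, real_inner_smul_right, norm_inv,
    Real.norm_eq_abs, abs_of_pos ha, abs_of_pos hb, mul_pow]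
  field_simp
  ring

lemma chordal_eq_dist {n : ℕ} (x y : OnePoint (Rn n)) :
    chordal x y = dist (chEmb x) (chEmb y) := by
  have base : ∀ (z : Rn n), dist (chEmb (z : OnePoint (Rn n))) (chEmb (OnePoint.infty))
      = 1 / Real.sqrt (1 + ‖z‖ ^ 2) := by
    intro z
    have hb : (0:ℝ) < 1 + ‖z‖ ^ 2 := by positivity
    rw [WithLp.prod_dist_eq_of_L2]
    have h1 : dist ((chEmb (z : OnePoint (Rn n))).fst) ((chEmb (n := n) OnePoint.infty).fst) ^ 2 +
        dist ((chEmb (z : OnePoint (Rn n))).snd) ((chEmb (n := n) OnePoint.infty).snd) ^ 2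
        = 1 / (1 + ‖z‖ ^ 2) := by
      show dist ((1 + ‖z‖ ^ 2)⁻¹ • z) (0 : Rn n) ^ 2 +
        dist (‖z‖ ^ 2 / (1 + ‖z‖ ^ 2)) (1 : ℝ) ^ 2 = 1 / (1 + ‖z‖ ^ 2)
      rw [dist_zero_right, Real.dist_eq, norm_smul, norm_inv,
        Real.norm_eq_abs, abs_of_pos hb, mul_pow, sq_abs]
      field_simp
      ring
    rw [h1, one_div, one_div, Real.sqrt_inv]
  cases x with
  | infty =>
    cases y with
    | infty => simp [chordal, chEmb]
    | coe y =>
      have := base y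
      rw [dist_comm] at this
      rw [show chordal (OnePoint.infty) (y : OnePoint (Rn n)) = 1 / Real.sqrt (1 + ‖y‖ ^ 2) from rfl, this]
  | coe x =>
    cases y with
    | infty =>
      rw [show chordal (x : OnePoint (Rn n)) OnePoint.infty = 1 / Real.sqrt (1 + ‖x‖ ^ 2) from rfl, base x]
    | coe y =>
      have ha : (0:ℝ) < 1 + ‖x‖ ^ 2 := by positivity
      have hb : (0:ℝ) < 1 + ‖y‖ ^ 2 := by positivity
      rw [WithLp.prod_dist_eq_of_L2]
      have h1 : dist ((chEmb (x : OnePoint (Rn n))).fst) ((chEmb (y : OnePoint (Rn n))).fst) ^ 2 +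
          dist ((chEmb (x : OnePoint (Rn n))).snd) ((chEmb (y : OnePoint (Rn n))).snd) ^ 2
          = ‖x - y‖ ^ 2 / ((1 + ‖x‖ ^ 2) * (1 + ‖y‖ ^ 2)) := by
        show dist ((1 + ‖x‖ ^ 2)⁻¹ • x) ((1 + ‖y‖ ^ 2)⁻¹ • y) ^ 2 +
          dist (‖x‖ ^ 2 / (1 + ‖x‖ ^ 2)) (‖y‖ ^ 2 / (1 + ‖y‖ ^ 2)) ^ 2
          = ‖x - y‖ ^ 2 / ((1 + ‖x‖ ^ 2) * (1 + ‖y‖ ^ 2))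
        rw [dist_eq_norm, Real.dist_eq, sq_abs, key_sq]
      rw [h1]
      show dist x y / (Real.sqrt (1 + ‖x‖ ^ 2) * Real.sqrt (1 + ‖y‖ ^ 2)) = _
      rw [Real.sqrt_div (by positivity), dist_eq_norm, Real.sqrt_sq (norm_nonneg _),
        Real.sqrt_mul ha.le]

lemma chordal_comm {n : ℕ} (x y : OnePoint (Rn n)) : chordal x y = chordal y x := by
  rw [chordal_eq_dist, chordal_eq_dist, dist_comm]

lemma chordal_triangle {n : ℕ} (x y z : OnePoint (Rn n)) :
    chordal x z ≤ chordal x y + chordal y z := by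
  rw [chordal_eq_dist, chordal_eq_dist, chordal_eq_dist]
  exact dist_triangle _ _ _

/-- if `f_m → f` locally uniformly on `D` w.r.t. the chordal metric,
`B(x₀,ε₁) ⊆ D`, and the chordal balls `B_h(f_m(x₀), r_*)` are contained in
`f_m(B(x₀,ε₁))` for all `m`, then `B_h(f(x₀), r_*/2) ⊆ f_m(B(x₀,ε₁)) ⊆ ℝⁿ` for all
sufficiently large `m`; in particular `f(x₀) ≠ ∞`. -/
theorem statement9 {n : ℕ} (hn : 2 ≤ n) (D : Set (Rn n)) (hDopen : IsOpen D)
    (hDconn : IsConnected D)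
    (x0 : Rn n) (hx0 : x0 ∈ D) (ε1 : ℝ) (hε1 : 0 < ε1)
    (hball : Metric.ball x0 ε1 ⊆ D)
    (fm : ℕ → Rn n → Rn n) (f : Rn n → OnePoint (Rn n))
    (hconv : ChordalLocUnif fm f D)
    (rs : ℝ) (hrs : 0 < rs)
    (hin : ∀ m : ℕ, {y : OnePoint (Rn n) | chordal y (fm m x0) < rs} ⊆
      (fun z : Rn n => (z : OnePoint (Rn n))) '' (fm m '' Metric.ball x0 ε1)) :
    f x0 ≠ (OnePoint.infty : OnePoint (Rn n)) ∧
      ∀ᶠ m in Filter.atTop, {y : OnePoint (Rn n) | chordal y (f x0) < rs / 2} ⊆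
        (fun z : Rn n => (z : OnePoint (Rn n))) '' (fm m '' Metric.ball x0 ε1) := by

  obtain ⟨δ, hδ, N, hN⟩ := hconv x0 hx0 (rs / 2) (by linarith)
  have hclose : ∀ m ≥ N, chordal ((fm m x0 : OnePoint (Rn n))) (f x0) < rs / 2 := by
    intro m hm
    exact hN m hm x0 hx0 (by simpa using hδ)
  have hinfty : f x0 ≠ OnePoint.infty := by
    intro h
    have h1 : (OnePoint.infty : OnePoint (Rn n)) ∈
        {y : OnePoint (Rn n) | chordal y ((fm N x0 : OnePoint (Rn n))) < rs} := by
      show chordal (OnePoint.infty : OnePoint (Rn n)) ((fm N x0 : OnePoint (Rn n))) < rs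
      rw [chordal_comm, ← h]
      exact lt_of_lt_of_le (hclose N le_rfl) (by linarith)
    obtain ⟨z, _, hz⟩ := hin N h1
    exact OnePoint.coe_ne_infty z hz
  refine ⟨hinfty, Filter.eventually_atTop.2 ⟨N, fun m hm y hy => ?_⟩⟩
  apply hin m
  have h2 : chordal (f x0) ((fm m x0 : OnePoint (Rn n))) < rs / 2 := by
    rw [chordal_comm]; exact hclose m hm
  have hy' : chordal y (f x0) < rs / 2 := hy
  show chordal y ((fm m x0 : OnePoint (Rn n))) < rs
  exact lt_of_le_of_lt (chordal_triangle y (f x0) _) (by linarith)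
end
end
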